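/- If f is continuous on S¹ and f(θ₀) = 0 for some θ₀, then the Toeplitz operator T_f is not Fredholm. -/

import Mathlib

open ContinuousLinearMap

/-- A bounded operator on a (complex) Hilbert space is *Fredholm* if there exists a
bounded operator `B` such that `1 - F * B` and `1 - B * F` are compact. -/
def IsFredholm {H : Type*} [NormedAddCommGroup H] [InnerProductSpace ℂ H]
    (F : H →L[ℂ] H) : Prop :=
  ∃ B : H →L[ℂ] H,
    IsCompactOperator (⇑(1 - F * B)) ∧ IsCompactOperator (⇑(1 - B * F))

/-- The Fredholm index `Index F = dim Ker F - dim Ker F†`. -/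
noncomputable def fredholmIndex {H : Type*} [NormedAddCommGroup H]
    [InnerProductSpace ℂ H] [CompleteSpace H] (F : H →L[ℂ] H) : ℤ :=
  (Module.finrank ℂ (LinearMap.ker (F : H →ₗ[ℂ] H)) : ℤ) -
    (Module.finrank ℂ (LinearMap.ker (ContinuousLinearMap.adjoint F : H →ₗ[ℂ] H)) : ℤ)

open MeasureTheory AddCircle

noncomputable section

instance : Fact (0 < 2 * Real.pi) := ⟨by positivity⟩

/-- `L²(S¹)` where `S¹ = ℝ/2πℤ`, with normalized Haar measure. -/
abbrev L2 : Type := Lp ℂ 2 (@haarAddCircle (2 * Real.pi) _)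

/-- The Hardy space `H ⊂ L²(S¹)`: the closed span of the Fourier modes `e_n`, `n ≥ 0`. -/
def Hardy : Submodule ℂ L2 :=
  (Submodule.span ℂ (Set.range fun n : ℕ => (fourierLp 2 (n : ℤ) : L2))).topologicalClosure

instance : CompleteSpace Hardy := (Submodule.isClosed_topologicalClosure _).completeSpace_coe

/-- The orthogonal projection `P : L²(S¹) → H`. -/
def hardyProj : L2 →L[ℂ] Hardy := Submodule.orthogonalProjectionOnto Hardy

/-- `M` is the operator of pointwise multiplication by `f` on `L²(S¹)`. -/
def IsMulBy (M : L2 →L[ℂ] L2) (f : AddCircle (2 * Real.pi) → ℂ) : Prop :=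
  ∀ ψ : L2, (M ψ : AddCircle (2 * Real.pi) → ℂ)
      =ᵐ[@haarAddCircle (2 * Real.pi) _] fun x => f x * ψ x

/-- `T` is the Toeplitz operator with symbol `f`: `T ψ = P (f ψ)` for `ψ ∈ H`. -/
def IsToeplitz (T : Hardy →L[ℂ] Hardy) (f : AddCircle (2 * Real.pi) → ℂ) : Prop :=
  ∃ M : L2 →L[ℂ] L2, IsMulBy M f ∧ ∀ ψ : Hardy, T ψ = hardyProj (M ψ)

/-!
A Fredholm operator `T` has a left parametrix `B` with `1 - B T` compact, and compact operators
send bounded weakly null sequences to norm null ones; so `T` cannot map a weakly null sequence of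
unit vectors to a norm null sequence. For `T_f` with `f θ₀ = 0` such a sequence exists. The
indicator `χ` of a small ball around `θ₀` satisfies `‖f χ‖ < ε ‖χ‖`, an open condition, so some
trigonometric polynomial `y` satisfies it too. Multiplying `y` by a high Fourier mode `e_n`
preserves `‖y‖` and `‖f y‖` and moves its spectrum above any given frequency `N`; normalized,
the result `ψ` lies in the Hardy space, is orthogonal to `e_a` for `a < N`, and `‖T_f ψ‖ ≤ ‖f ψ‖`
is small.
-/

open Filter Topology Bornology
open scoped InnerProductSpace

section WeakConvergence

variable {𝕜 E ι : Type*} [RCLike 𝕜] [NormedAddCommGroup E] [InnerProductSpace 𝕜 E]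
  {l : Filter ι}

theorem tendsto_inner_zero_of_dense_span {κ : Type*} {v : κ → E}
    (hv : Dense (Submodule.span 𝕜 (Set.range v) : Set E)) {x : ι → E}
    (hx : IsBounded (Set.range x)) (h : ∀ k, Tendsto (fun j => ⟪v k, x j⟫_𝕜) l (𝓝 0))
    (u : E) : Tendsto (fun j => ⟪u, x j⟫_𝕜) l (𝓝 0) := by
  obtain ⟨C, hC⟩ := isBounded_iff_forall_norm_le.mp hx
  have hbound (j : ι) (u : E) : ‖innerSLFlip 𝕜 (x j) u‖ ≤ C * ‖u‖ := by
    rw [innerSLFlip_apply_apply, mul_comm]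
    exact (norm_inner_le_norm u (x j)).trans (by gcongr; exact hC _ ⟨j, rfl⟩)
  have hequi : Equicontinuous fun j u => ⟪u, x j⟫_𝕜 :=
    ((NormedSpace.equicontinuous_TFAE fun j => innerSLFlip 𝕜 (x j)).out 3 1).mp
      (⟨C, hbound⟩ : ∃ C, ∀ j u, _)
  let S : Submodule 𝕜 E :=
    { carrier := {u | Tendsto (fun j => ⟪u, x j⟫_𝕜) l (𝓝 0)}
      add_mem' := fun hu hw => by simpa [inner_add_left] using hu.add hw
      zero_mem' := by simpa using tendsto_const_nhds
      smul_mem' := fun c u hu => by simpa [inner_smul_left] using hu.const_mul _ }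
  have hS : IsClosed (S : Set E) := hequi.isClosed_setOfPred_tendsto continuous_const
  have hspan : Submodule.span 𝕜 (Set.range v) ≤ S :=
    Submodule.span_le.mpr (Set.range_subset_iff.mpr h)
  exact hS.closure_subset_iff.mpr hspan (hv u)

variable [CompleteSpace E] {F : Type*} [NormedAddCommGroup F] [InnerProductSpace 𝕜 F]
  [CompleteSpace F]

theorem IsCompactOperator.tendsto_zero_of_tendsto_inner_zero {K : E →L[𝕜] F}
    (hK : IsCompactOperator K) {x : ι → E} (hx : IsBounded (Set.range x))
    (hw : ∀ u, Tendsto (fun j => ⟪u, x j⟫_𝕜) l (𝓝 0)) :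
    Tendsto (fun j => K (x j)) l (𝓝 0) := by
  obtain ⟨S, hS, hKS⟩ := hK.image_subset_compact_of_bounded (f := (K : E →ₗ[𝕜] F)) hx
  refine hS.tendsto_nhds_of_unique_mapClusterPt
    (Eventually.of_forall fun j => hKS ⟨x j, ⟨j, rfl⟩, rfl⟩) fun a _ ha => ?_
  have hlim : Tendsto (fun j => ⟪a, K (x j)⟫_𝕜) l (𝓝 0) := by
    simpa [adjoint_inner_left] using hw (adjoint K a)
  have hclus : MapClusterPt ⟪a, a⟫_𝕜 l (fun j => ⟪a, K (x j)⟫_𝕜) :=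
    ha.continuousAt_comp (continuous_const.inner continuous_id).continuousAt
  exact inner_self_eq_zero.mp (eq_of_nhds_neBot (ClusterPt.mono hclus hlim))

end WeakConvergence

theorem not_isFredholm_of_tendsto_inner_zero {H ι : Type*} [NormedAddCommGroup H]
    [InnerProductSpace ℂ H] [CompleteSpace H] {T : H →L[ℂ] H} {l : Filter ι} [l.NeBot]
    {x : ι → H} (hx : ∀ j, ‖x j‖ = 1) (hw : ∀ u, Tendsto (fun j => ⟪u, x j⟫_ℂ) l (𝓝 0))
    (hT : Tendsto (fun j => T (x j)) l (𝓝 0)) : ¬ _root_.IsFredholm T := by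
  rintro ⟨B, -, hK⟩
  have hbdd : IsBounded (Set.range x) :=
    isBounded_iff_forall_norm_le.mpr ⟨1, Set.forall_mem_range.mpr fun j => (hx j).le⟩
  have hx0 : Tendsto x l (𝓝 0) := by
    simpa using (hK.tendsto_zero_of_tendsto_inner_zero hbdd hw).add
      ((B.continuous.tendsto 0).comp hT)
  simpa [hx] using hx0.norm

theorem MeasureTheory.Lp.norm_eq_of_ae_norm_eq {α E F : Type*} {m : MeasurableSpace α}
    {μ : Measure α} {p : ENNReal} [NormedAddCommGroup E] [NormedAddCommGroup F]
    {f : Lp E p μ} {g : Lp F p μ} (h : ∀ᵐ x ∂μ, ‖f x‖ = ‖g x‖) : ‖f‖ = ‖g‖ := by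
  rw [Lp.norm_def, Lp.norm_def, eLpNorm_congr_norm_ae h]

local notation "S¹" => AddCircle (2 * Real.pi)
local notation "haar" => @haarAddCircle (2 * Real.pi) _

theorem dense_span_fourierLp :
    Dense (Submodule.span ℂ (Set.range (fourierLp 2 : ℤ → L2)) : Set L2) :=
  Submodule.dense_iff_topologicalClosure_eq_top.mpr (span_fourierLp_closure_eq_top (by norm_num))

theorem fourierLp_mem_hardy {k : ℤ} (hk : 0 ≤ k) : (fourierLp 2 k : L2) ∈ Hardy :=
  Submodule.le_topologicalClosure _ <| Submodule.subset_span ⟨k.toNat, by simp [hk]⟩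

def fourierShift (n : ℤ) : L2 →ₗ[ℂ] L2 where
  toFun v := ((fourierLp ⊤ n : Lp ℂ ⊤ haar) • v : L2)
  map_add' := Lp.add_smul _
  map_smul' c v := (Lp.smul_comm c _ v).symm

theorem coeFn_fourierShift (n : ℤ) (v : L2) :
    fourierShift n v =ᵐ[haar] fun x => fourier n x * v x := by
  filter_upwards [Lp.coeFn_lpSMul (r := 2) (fourierLp ⊤ n : Lp ℂ ⊤ haar) v, coeFn_fourierLp ⊤ n]
    with x hx hn
  exact hx.trans (by rw [Pi.smul_apply', hn, smul_eq_mul])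

theorem fourierShift_fourierLp (n k : ℤ) :
    fourierShift n (fourierLp 2 k) = fourierLp 2 (n + k) := by
  refine Lp.ext ?_
  filter_upwards [coeFn_fourierShift n (fourierLp 2 k), coeFn_fourierLp 2 k,
    coeFn_fourierLp 2 (n + k)] with x h hk hnk
  rw [h, hk, hnk, fourier_add]

theorem norm_fourierShift (n : ℤ) (v : L2) : ‖fourierShift n v‖ = ‖v‖ :=
  Lp.norm_eq_of_ae_norm_eq <|
    (coeFn_fourierShift n v).mono fun x hx => by simp [hx, Circle.norm_coe]

theorem IsMulBy.norm_apply_fourierShift {M : L2 →L[ℂ] L2} {f : S¹ → ℂ} (hM : IsMulBy M f)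
    (n : ℤ) (v : L2) : ‖M (fourierShift n v)‖ = ‖M v‖ :=
  Lp.norm_eq_of_ae_norm_eq <| by
    filter_upwards [hM (fourierShift n v), hM v, coeFn_fourierShift n v] with x h hv hn
    simp [h, hv, hn, Circle.norm_coe]

theorem IsMulBy.exists_norm_apply_lt {M : L2 →L[ℂ] L2} {f : S¹ → ℂ} {θ₀ : S¹}
    (hf : ContinuousAt f θ₀) (h0 : f θ₀ = 0) (hM : IsMulBy M f) {ε : ℝ} (hε : 0 < ε) :
    ∃ χ : L2, ‖M χ‖ < ε * ‖χ‖ := by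
  obtain ⟨δ, hδ, hfδ⟩ := Metric.continuousAt_iff.mp hf (ε / 2) (half_pos hε)
  have hs : MeasurableSet (Metric.ball θ₀ δ) := Metric.isOpen_ball.measurableSet
  have hμs : haar (Metric.ball θ₀ δ) ≠ ⊤ := measure_ne_top _ _
  let χ : L2 := indicatorConstLp 2 hs hμs 1
  have hχ : 0 < ‖χ‖ := by
    rw [norm_indicatorConstLp two_ne_zero ENNReal.ofNat_ne_top]
    simpa [measureReal_def] using Real.rpow_pos_of_pos
      (ENNReal.toReal_pos (Metric.measure_ball_pos haar θ₀ hδ).ne' hμs) _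
  have hMχ : ‖M χ‖ ≤ ‖((ε / 2 : ℝ) : ℂ) • χ‖ := by
    refine Lp.norm_le_norm_of_ae_le ?_
    filter_upwards [hM χ, indicatorConstLp_coeFn (p := 2) (hs := hs) (hμs := hμs) (c := (1 : ℂ)),
      Lp.coeFn_smul ((ε / 2 : ℝ) : ℂ) χ] with x hMx hχx hsx
    rw [hMx, hsx, Pi.smul_apply, smul_eq_mul, norm_mul, norm_mul, hχx]
    by_cases hx : x ∈ Metric.ball θ₀ δ
    · gcongr
      simpa [h0, abs_of_pos hε] using (hfδ hx).le
    · simp [Set.indicator_of_notMem hx]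
  refine ⟨χ, hMχ.trans_lt ?_⟩
  rw [norm_smul, Complex.norm_real, Real.norm_of_nonneg (by positivity)]
  exact mul_lt_mul_of_pos_right (half_lt_self hε) hχ

theorem span_fourierLp_Ici_le_hardy {N : ℤ} (hN : 0 ≤ N) :
    Submodule.span ℂ (fourierLp 2 '' Set.Ici N) ≤ Hardy :=
  Submodule.span_le.mpr <| Set.image_subset_iff.mpr fun _ hk => fourierLp_mem_hardy (hN.trans hk)

theorem inner_fourierLp_eq_zero_of_mem_span_Ici {a N : ℤ} (ha : a < N) {ψ : L2}
    (hψ : ψ ∈ Submodule.span ℂ (fourierLp 2 '' Set.Ici N)) :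
    ⟪(fourierLp 2 a : L2), ψ⟫_ℂ = 0 := by
  have hle : Submodule.span ℂ (fourierLp 2 '' Set.Ici N) ≤ (ℂ ∙ (fourierLp 2 a : L2))ᗮ :=
    Submodule.span_le.mpr <| Set.image_subset_iff.mpr fun k hk =>
      Submodule.mem_orthogonal_singleton_iff_inner_right.mpr <|
        orthonormal_fourier.2 (ha.trans_le hk).ne
  exact Submodule.mem_orthogonal_singleton_iff_inner_right.mp (hle hψ)

theorem exists_fourierShift_mem_span_Ici {y : L2}
    (hy : y ∈ Submodule.span ℂ (Set.range (fourierLp 2 : ℤ → L2))) (N : ℤ) :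
    ∃ n, fourierShift n y ∈ Submodule.span ℂ (fourierLp 2 '' Set.Ici N) := by
  obtain ⟨c, rfl⟩ := Finsupp.mem_span_range_iff_exists_finsupp.mp hy
  obtain ⟨m, hm⟩ := c.support.bddBelow
  refine ⟨N - m, ?_⟩
  simp only [Finsupp.sum, map_sum, map_smul, fourierShift_fourierLp]
  exact Submodule.sum_mem _ fun k hk => Submodule.smul_mem _ _ <|
    Submodule.subset_span ⟨N - m + k, Set.mem_Ici.mpr (by linarith [hm hk]), rfl⟩

theorem IsMulBy.exists_unit_mem_span_Ici_norm_apply_lt {M : L2 →L[ℂ] L2} {f : S¹ → ℂ}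
    {θ₀ : S¹} (hf : ContinuousAt f θ₀) (h0 : f θ₀ = 0) (hM : IsMulBy M f) {ε : ℝ} (hε : 0 < ε)
    (N : ℤ) :
    ∃ ψ ∈ Submodule.span ℂ (fourierLp 2 '' Set.Ici N), ‖ψ‖ = 1 ∧ ‖M ψ‖ < ε := by
  obtain ⟨y, hy, hMy⟩ := dense_span_fourierLp.exists_mem_open
    (isOpen_lt (by fun_prop) (by fun_prop) : IsOpen {v : L2 | ‖M v‖ < ε * ‖v‖})
    (hM.exists_norm_apply_lt hf h0 hε)
  obtain ⟨n, hn⟩ := exists_fourierShift_mem_span_Ici hy N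
  set ψ := fourierShift n y
  have hMψ : ‖M ψ‖ < ε * ‖ψ‖ := by
    rwa [hM.norm_apply_fourierShift, norm_fourierShift]
  have hψ : 0 < ‖ψ‖ := pos_of_mul_pos_right ((norm_nonneg _).trans_lt hMψ) hε.le
  refine ⟨(‖ψ‖⁻¹ : ℂ) • ψ, Submodule.smul_mem _ _ hn,
    norm_smul_inv_norm (norm_pos_iff.mp hψ), ?_⟩
  rw [map_smul, norm_smul, norm_inv, Complex.norm_real, norm_norm]
  exact (inv_mul_lt_iff₀ hψ).mpr (by linarith)

/-- If the continuous symbol `f` vanishes somewhere on the circle,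
then the Toeplitz operator `T_f` is not Fredholm. -/
theorem toeplitz_vanishing_symbol_not_fredholm (f : AddCircle (2 * Real.pi) → ℂ)
    (hf : Continuous f) (θ₀ : AddCircle (2 * Real.pi)) (h0 : f θ₀ = 0)
    (T : Hardy →L[ℂ] Hardy) (hT : IsToeplitz T f) :
    ¬ _root_.IsFredholm T := by
  obtain ⟨M, hM, hTM⟩ := hT
  choose ψ hψN hψ1 hMψ using fun j : ℕ =>
    hM.exists_unit_mem_span_Ici_norm_apply_lt hf.continuousAt h0 Nat.one_div_pos_of_nat j
  let x (j : ℕ) : Hardy := ⟨ψ j, span_fourierLp_Ici_le_hardy j.cast_nonneg (hψN j)⟩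
  refine not_isFredholm_of_tendsto_inner_zero (l := atTop) (x := x) hψ1 (fun u => ?_) ?_
  · refine tendsto_inner_zero_of_dense_span dense_span_fourierLp
      (isBounded_iff_forall_norm_le.mpr ⟨1, Set.forall_mem_range.mpr fun j => (hψ1 j).le⟩)
      (fun k => tendsto_const_nhds.congr' ?_) (u : L2)
    filter_upwards [eventually_gt_atTop k.toNat] with j hj
    exact (inner_fourierLp_eq_zero_of_mem_span_Ici (by omega) (hψN j)).symm
  · refine squeeze_zero_norm (fun j => ?_) tendsto_one_div_add_atTop_nhds_zero_nat
    rw [hTM]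
    exact (hardyProj.le_of_opNorm_le (Submodule.orthogonalProjectionOnto_norm_le Hardy) _).trans
      (by simpa using (hMψ j).le)
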